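/- Let P be a finite poset in which the LYM inequality holds for all antichains contained in two consecutive layers; that is, for all k and every antichain A ⊆ P_k ∪ P_{k+1}, ∑_{x∈A} 1/|P_{r(x)}| ≤ 1. Then P is a LYM poset: every antichain A ⊆ P satisfies ∑_{x∈A} 1/|P_{r(x)}| ≤ 1. -/
import Mathlib


/-- The rank of an element of a (finite) poset: the length of the longest
chain strictly below it (equivalently, `r(x) = 0` for minimal `x` and
`r(x) = max {r(y) : y < x} + 1` otherwise). -/
noncomputable def rk {P : Type*} [Preorder P] (x : P) : ℕ :=
  (Order.height x).toNat

/-- The `k`-th layer of a poset: the set of elements of rank `k`. -/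
def layerSet (P : Type*) [Preorder P] (k : ℕ) : Set P := {x : P | rk x = k}

/-- The size of the `k`-th layer. -/
noncomputable def layerCard (P : Type*) [Preorder P] (k : ℕ) : ℕ := (layerSet P k).ncard

/-- A finite poset is LYM if every antichain `A` satisfies
`∑_{x ∈ A} 1 / |P_{r(x)}| ≤ 1`. -/
def IsLYM (P : Type*) [PartialOrder P] [Fintype P] : Prop :=
  ∀ A : Finset P, IsAntichain (· ≤ ·) (A : Set P) →
    ∑ x ∈ A, (1 : ℝ) / layerCard P (rk x) ≤ 1

/-- A poset is log-concave if its layer sizes `p_k` satisfy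
`p_k ^ 2 ≥ p_{k-1} * p_{k+1}` for all `k ≥ 1`. -/
def LayerLogConcave (P : Type*) [Preorder P] : Prop :=
  ∀ k : ℕ, 1 ≤ k → layerCard P (k - 1) * layerCard P (k + 1) ≤ layerCard P k ^ 2

section aux
variable {P : Type*} [Fintype P] [PartialOrder P]

lemma height_lt_top' (x : P) : Order.height x < ⊤ := by
  refine lt_of_le_of_lt (Order.height_le fun p _ => ?_)
    (WithTop.coe_lt_top (Fintype.card P) : (Fintype.card P : ℕ∞) < ⊤)
  exact Nat.cast_le.mpr p.length_lt_card.le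

lemma rk_le_card (x : P) : rk x ≤ Fintype.card P := by
  have : Order.height x ≤ (Fintype.card P : ℕ∞) :=
    Order.height_le fun p _ => Nat.cast_le.mpr p.length_lt_card.le
  simpa [rk] using ENat.toNat_le_of_le_coe this

lemma rk_lt_rk {x y : P} (hxy : x < y) : rk x < rk y := by
  have hx := height_lt_top' x
  have hy := height_lt_top' y
  have hlt := Order.height_strictMono hxy hx
  have hx' : ((rk x : ℕ) : ℕ∞) = Order.height x := ENat.coe_toNat hx.ne
  have hy' : ((rk y : ℕ) : ℕ∞) = Order.height y := ENat.coe_toNat hy.ne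
  exact_mod_cast hx' ▸ hy' ▸ hlt

lemma exists_rk_pred {x : P} {k : ℕ} (hx : rk x = k + 1) : ∃ y, y < x ∧ rk y = k := by
  have hfin := height_lt_top' x
  unfold rk at hx
  have hh : Order.height x = ((k : ℕ∞) + 1) := by
    rw [← ENat.coe_toNat hfin.ne, hx]; push_cast; ring
  rw [Order.height_eq_coe_add_one_iff] at hh
  obtain ⟨-, ⟨y, hy, hyk⟩, -⟩ := hh
  exact ⟨y, hy, by rw [rk, hyk]; simp⟩

lemma layerCard_pos_of_rk {x : P} {k : ℕ} (hx : rk x = k) : 0 < layerCard P k :=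
  (Set.ncard_pos (Set.toFinite _)).mpr ⟨x, hx⟩

lemma layerCard_eq_filter {k : ℕ} [DecidablePred fun x : P => rk x = k] :
    layerCard P k = (Finset.univ.filter (fun x : P => rk x = k)).card := by
  rw [layerCard, ← Set.ncard_coe_finset]
  congr 1
  ext x; simp [layerSet]

lemma main_induction {P : Type*} [Fintype P] [PartialOrder P]
    (h : ∀ (k : ℕ) (A : Finset P), (∀ x ∈ A, rk x = k ∨ rk x = k + 1) →
      IsAntichain (· ≤ ·) (A : Set P) →
      ∑ x ∈ A, (1 : ℝ) / layerCard P (rk x) ≤ 1) :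
    ∀ (k : ℕ) (A : Finset P), IsAntichain (· ≤ ·) (A : Set P) → (∀ x ∈ A, rk x ≤ k) →
      ∑ x ∈ A, (1 : ℝ) / layerCard P (rk x) ≤ 1 := by
  classical
  intro k
  induction k with
  | zero =>
    intro A hA hle
    exact h 0 A (fun x hx => Or.inl (Nat.le_zero.mp (hle x hx))) hA
  | succ k ih =>
    intro A hA hle
    set T : Finset P := A.filter (fun x => rk x = k + 1) with hTdef
    set B : Finset P := A.filter (fun x => ¬ rk x = k + 1) with hBdef
    have hTA : T ⊆ A := Finset.filter_subset _ _
    have hBA : B ⊆ A := Finset.filter_subset _ _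
    have hTrk : ∀ x ∈ T, rk x = k + 1 := fun x hx => (Finset.mem_filter.mp hx).2
    have hBrk : ∀ x ∈ B, rk x ≤ k := by
      intro x hx
      have h1 := hle x (hBA hx)
      have h2 := (Finset.mem_filter.mp hx).2
      omega
    set N : Finset P := Finset.univ.filter (fun y => rk y = k ∧ ∃ a ∈ T, y < a) with hNdef
    have hNrk : ∀ y ∈ N, rk y = k := fun y hy => ((Finset.mem_filter.mp hy).2).1
    have hNlt : ∀ y ∈ N, ∃ a ∈ T, y < a := fun y hy => ((Finset.mem_filter.mp hy).2).2
    -- key inequality: sum over T ≤ sum over N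
    have key : ∑ x ∈ T, (1 : ℝ) / layerCard P (rk x) ≤ ∑ y ∈ N, (1 : ℝ) / layerCard P (rk y) := by
      rcases T.eq_empty_or_nonempty with hTe | ⟨a, ha⟩
      · rw [hTe, Finset.sum_empty]
        exact Finset.sum_nonneg fun y _ => by positivity
      · obtain ⟨y0, hy0a, hy0k⟩ := exists_rk_pred (hTrk a ha)
        set L : Finset P := Finset.univ.filter (fun y : P => rk y = k) with hLdef
        have hNL : N ⊆ L := by
          intro y hy
          simp only [hLdef, Finset.mem_filter, Finset.mem_univ, true_and]
          exact hNrk y hy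
        set M : Finset P := L \ N with hMdef
        have hMrk : ∀ y ∈ M, rk y = k := by
          intro y hy
          have := (Finset.mem_sdiff.mp hy).1
          simpa [hLdef] using this
        have hC : IsAntichain (· ≤ ·) ((T ∪ M : Finset P) : Set P) := by
          intro u hu v hv hne hle'
          simp only [Finset.coe_union, Set.mem_union, Finset.mem_coe] at hu hv
          have hlt : u < v := lt_of_le_of_ne hle' hne
          have hrk := rk_lt_rk hlt
          rcases hu with hu | hu <;> rcases hv with hv | hv
          · have := hTrk u hu; have := hTrk v hv; omega
          · have := hTrk u hu; have := hMrk v hv; omega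
          · -- u ∈ M, v ∈ T : then u ∈ N, contradiction
            have huN : u ∈ N := by
              simp only [hNdef, Finset.mem_filter, Finset.mem_univ, true_and]
              exact ⟨hMrk u hu, v, hv, hlt⟩
            exact (Finset.mem_sdiff.mp hu).2 huN
          · have := hMrk u hu; have := hMrk v hv; omega
        have hCrk : ∀ x ∈ T ∪ M, rk x = k ∨ rk x = k + 1 := by
          intro x hx
          rcases Finset.mem_union.mp hx with hx | hx
          · exact Or.inr (hTrk x hx)
          · exact Or.inl (hMrk x hx)
        have hsum := h k (T ∪ M) hCrk hC
        have hdisj : Disjoint T M := by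
          rw [Finset.disjoint_left]
          intro x hxT hxM
          have := hTrk x hxT; have := hMrk x hxM; omega
        rw [Finset.sum_union hdisj] at hsum
        -- turn sums into cardinalities
        have pk1pos : 0 < layerCard P (k + 1) := layerCard_pos_of_rk (hTrk a ha)
        have pkpos : 0 < layerCard P k := layerCard_pos_of_rk hy0k
        set pk1 : ℝ := (layerCard P (k + 1) : ℝ) with hpk1
        set pk : ℝ := (layerCard P k : ℝ) with hpk
        have pk1pos' : (0 : ℝ) < pk1 := by rw [hpk1]; exact_mod_cast pk1pos
        have pkpos' : (0 : ℝ) < pk := by rw [hpk]; exact_mod_cast pkpos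
        have hTsum : ∑ x ∈ T, (1 : ℝ) / layerCard P (rk x) = T.card / pk1 := by
          rw [Finset.sum_congr rfl (fun x hx => by rw [hTrk x hx]), Finset.sum_const,
            nsmul_eq_mul]
          ring
        have hMsum : ∑ x ∈ M, (1 : ℝ) / layerCard P (rk x) = M.card / pk := by
          rw [Finset.sum_congr rfl (fun x hx => by rw [hMrk x hx]), Finset.sum_const,
            nsmul_eq_mul]
          ring
        have hNsum : ∑ y ∈ N, (1 : ℝ) / layerCard P (rk y) = N.card / pk := by
          rw [Finset.sum_congr rfl (fun y hy => by rw [hNrk y hy]), Finset.sum_const,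
            nsmul_eq_mul]
          ring
        have hLcard : (L.card : ℝ) = pk := by
          rw [hpk, layerCard_eq_filter (k := k)]
        have hMcard : (M.card : ℝ) = pk - N.card := by
          rw [hMdef, Finset.card_sdiff_of_subset hNL, Nat.cast_sub (Finset.card_le_card hNL), hLcard]
        rw [hTsum, hMsum, hMcard] at hsum
        rw [hTsum, hNsum]
        have hexp : (pk - N.card) / pk = 1 - N.card / pk := by
          rw [sub_div, div_self pkpos'.ne']
        rw [hexp] at hsum
        linarith
    -- the pushed-down antichain B ∪ N
    have hdisjBN : Disjoint B N := by
      rw [Finset.disjoint_left]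
      intro y hyB hyN
      obtain ⟨a, haT, hya⟩ := hNlt y hyN
      exact hA (Finset.mem_coe.mpr (hBA hyB)) (Finset.mem_coe.mpr (hTA haT)) (ne_of_lt hya)
        (le_of_lt hya)
    have hBN : IsAntichain (· ≤ ·) ((B ∪ N : Finset P) : Set P) := by
      intro u hu v hv hne hle'
      simp only [Finset.coe_union, Set.mem_union, Finset.mem_coe] at hu hv
      have hlt : u < v := lt_of_le_of_ne hle' hne
      rcases hu with hu | hu <;> rcases hv with hv | hv
      · exact hA (Finset.mem_coe.mpr (hBA hu)) (Finset.mem_coe.mpr (hBA hv)) hne hle'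
      · obtain ⟨a, haT, hva⟩ := hNlt v hv
        exact hA (Finset.mem_coe.mpr (hBA hu)) (Finset.mem_coe.mpr (hTA haT))
          (ne_of_lt (lt_trans hlt hva)) (le_of_lt (lt_trans hlt hva))
      · have := rk_lt_rk hlt
        have := hNrk u hu; have := hBrk v hv; omega
      · have := rk_lt_rk hlt
        have := hNrk u hu; have := hNrk v hv; omega
    have hBNrk : ∀ x ∈ B ∪ N, rk x ≤ k := by
      intro x hx
      rcases Finset.mem_union.mp hx with hx | hx
      · exact hBrk x hx
      · exact le_of_eq (hNrk x hx)
    have hih := ih (B ∪ N) hBN hBNrk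
    rw [Finset.sum_union hdisjBN] at hih
    have hsplitA : ∑ x ∈ A, (1 : ℝ) / layerCard P (rk x)
        = ∑ x ∈ T, (1 : ℝ) / layerCard P (rk x) + ∑ x ∈ B, (1 : ℝ) / layerCard P (rk x) := by
      rw [hTdef, hBdef, Finset.sum_filter_add_sum_filter_not]
    rw [hsplitA]
    linarith

end aux

/-- If the LYM inequality holds for all antichains contained in two consecutive layers
of a finite poset `P`, then `P` is a LYM poset. -/
theorem isLYM_of_consecutive_LYM {P : Type*} [Fintype P] [PartialOrder P]
    (h : ∀ (k : ℕ) (A : Finset P), (∀ x ∈ A, rk x = k ∨ rk x = k + 1) →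
      IsAntichain (· ≤ ·) (A : Set P) →
      ∑ x ∈ A, (1 : ℝ) / layerCard P (rk x) ≤ 1) :
    IsLYM P := by
  intro A hA
  exact main_induction h (Fintype.card P) A hA (fun x _ => rk_le_card x)
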